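/- Let H be a hypergraph with vertices v_1,…,v_n and hyperedges e_1,…,e_m, with no isolated vertices, and let σ ∈ 𝔦_m ⊗ 𝔦_n be its idem-Clifford transversal representation. Then there exists a smallest integer k ≥ 1 such that σ^k has a nonzero term of the form α ε_{{1,…,m}} ⊗ x_I in its canonical expansion; this k equals the minimum cardinality of a transversal of H, and for this k, every I with a nonzero coefficient on ε_{{1,…,m}} ⊗ x_I in σ^k satisfies |I| = k and {v_i : i ∈ I} is a minimum-cardinality transversal of H, with every such minimum transversal arising this way. -/

import Mathlib

open Finset

/-- Regular-representation action of the idem-Clifford blade `ε_J` (product of the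
idempotent generators `ε_j`, `j ∈ J`, satisfying `ε_j ^ 2 = ε_j`) on the coefficient
space, acting in the first coordinate. -/
noncomputable def epsBladeL (α γ : Type*) [DecidableEq α] (J : Finset α) :
    Module.End ℝ ((Finset α × γ) → ℝ) where
  toFun c := fun p => ∑ T ∈ p.1.powerset.filter (fun T => T ∪ J = p.1), c (T, p.2)
  map_add' x y := by
    funext p
    simp [Finset.sum_add_distrib]
  map_smul' r x := by
    funext p
    simp [Finset.mul_sum]

/-- Regular-representation action of the idem-Clifford blade `x_I` (product of the
idempotent generators `x_i`, `i ∈ I`, satisfying `x_i ^ 2 = x_i`) on the coefficient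
space, acting in the second coordinate. -/
noncomputable def epsBladeR (γ β : Type*) [DecidableEq β] (I : Finset β) :
    Module.End ℝ ((γ × Finset β) → ℝ) where
  toFun c := fun p => ∑ T ∈ p.2.powerset.filter (fun T => T ∪ I = p.2), c (p.1, T)
  map_add' x y := by
    funext p
    simp [Finset.sum_add_distrib]
  map_smul' r x := by
    funext p
    simp [Finset.mul_sum]

/-- The idem-Clifford transversal representation
`σ = Σ_i (∏_{j : v_i ∈ e_j} ε_j) ⊗ x_i ∈ 𝔦_m ⊗ 𝔦_n` of the hypergraph with
hyperedges `E : Fin m → Finset (Fin n)`. -/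
noncomputable def sigmaRep {n m : ℕ} (E : Fin m → Finset (Fin n)) :
    Module.End ℝ ((Finset (Fin m) × Finset (Fin n)) → ℝ) :=
  ∑ i : Fin n,
    epsBladeL (Fin m) (Finset (Fin n)) (Finset.univ.filter (fun j => i ∈ E j)) *
      epsBladeR (Finset (Fin m)) (Fin n) {i}

/-- The coefficient vector of `1 ∈ 𝔦_m ⊗ 𝔦_n`: the indicator of the empty blade.
Applying (the multiplication operator of) `u` to it and evaluating at `(J, I)` reads off
the coefficient `u_{(J,I)}` of the blade `ε_J ⊗ x_I` in the canonical expansion of `u`. -/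
noncomputable def delta0 (n m : ℕ) : (Finset (Fin m) × Finset (Fin n)) → ℝ :=
  fun p => if p = ((∅ : Finset (Fin m)), (∅ : Finset (Fin n))) then 1 else 0

/-!
Since the generators are idempotent, the blades multiply by taking unions of index sets:
`(ε_J ⊗ x_I) (ε_J' ⊗ x_I') = ε_{J ∪ J'} ⊗ x_{I ∪ I'}`. Expanding `σ ^ k` as a sum over words
`f : Fin k → Fin n`, each word contributes `ε_J ⊗ x_S` with `S` its set of letters and `J` the
set of hyperedges meeting `S`. Hence the coefficient of `ε_{{1,…,m}} ⊗ x_I` in `σ ^ k` counts the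
words whose letter set is exactly `I`, and it is nonzero iff `I` is a transversal with `|I| ≤ k`.
The least such `k` is therefore the transversal number, attained exactly at minimum transversals.
-/

section Blades

variable {α γ : Type*} [DecidableEq α] [DecidableEq γ]

theorem epsBladeL_single (J T : Finset α) (y : γ) :
    epsBladeL α γ J (Pi.single (T, y) 1) = Pi.single (T ∪ J, y) 1 := by
  funext ⟨A, z⟩
  by_cases hz : z = y
  · simp only [epsBladeL, LinearMap.coe_mk, AddHom.coe_mk, Pi.single_apply, Prod.mk.injEq, hz,
      and_true, Finset.sum_ite_eq', Finset.mem_filter, Finset.mem_powerset]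
    grind
  · simp [epsBladeL, hz]

theorem epsBladeR_single (I : Finset α) (x : γ) (U : Finset α) :
    epsBladeR γ α I (Pi.single (x, U) 1) = Pi.single (x, U ∪ I) 1 := by
  funext ⟨z, B⟩
  by_cases hz : z = x
  · simp only [epsBladeR, LinearMap.coe_mk, AddHom.coe_mk, Pi.single_apply, Prod.mk.injEq, hz,
      true_and, Finset.sum_ite_eq', Finset.mem_filter, Finset.mem_powerset]
    grind
  · simp [epsBladeR, hz]

end Blades

theorem Finset.image_univ_fin_cons {β : Type*} [DecidableEq β] {k : ℕ} (i : β)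
    (f : Fin k → β) :
    univ.image (Fin.cons i f : Fin (k + 1) → β) = insert i (univ.image f) := by
  ext b
  simp [Fin.exists_fin_succ, eq_comm]

theorem Finset.exists_fin_image_univ_eq {β : Type*} [DecidableEq β] {k : ℕ} {I : Finset β}
    (hI : I.Nonempty) (hk : #I ≤ k) : ∃ f : Fin k → β, univ.image f = I := by
  have : Nonempty I := hI.to_subtype
  let g : I → Fin k := Fin.castLE hk ∘ I.equivFin
  have hg : Function.Injective g := (Fin.castLE_injective hk).comp I.equivFin.injective
  refine ⟨Subtype.val ∘ Function.invFun g, ?_⟩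
  ext b
  simp only [mem_image, mem_univ, true_and, Function.comp_apply]
  refine ⟨?_, fun hb => ?_⟩
  · rintro ⟨t, rfl⟩
    exact (Function.invFun g t).2
  · obtain ⟨t, ht⟩ := Function.invFun_surjective hg ⟨b, hb⟩
    exact ⟨t, congrArg Subtype.val ht⟩

namespace Hypergraph

variable {n m : ℕ} (E : Fin m → Finset (Fin n))

def incidentEdges (i : Fin n) : Finset (Fin m) := univ.filter (fun j => i ∈ E j)

/-- The index `(J, I)` of the blade `ε_J ⊗ x_I` with `I = S` and `J` the set of hyperedges
that `S` meets. -/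
def coverBlade (S : Finset (Fin n)) : Finset (Fin m) × Finset (Fin n) :=
  (S.biUnion (incidentEdges E), S)

def IsTransversal (I : Finset (Fin n)) : Prop := ∀ j : Fin m, ∃ i ∈ I, i ∈ E j

theorem delta0_eq_single : delta0 n m = Pi.single (coverBlade E ∅) 1 := by
  funext p
  simp [delta0, coverBlade, Pi.single_apply]

theorem sigmaRep_single_coverBlade (S : Finset (Fin n)) :
    sigmaRep E (Pi.single (coverBlade E S) 1) =
      ∑ i : Fin n, Pi.single (coverBlade E (insert i S)) 1 := by
  simp only [sigmaRep, LinearMap.sum_apply, Module.End.mul_apply, coverBlade, epsBladeR_single,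
    epsBladeL_single, biUnion_insert]
  simp only [incidentEdges, union_comm _ (filter _ _), union_singleton]

theorem sigmaRep_pow_delta0 (k : ℕ) :
    (sigmaRep E ^ k) (delta0 n m) =
      ∑ f : Fin k → Fin n, Pi.single (coverBlade E (univ.image f)) 1 := by
  induction k with
  | zero => simpa using delta0_eq_single E
  | succ k ih =>
    rw [pow_succ', Module.End.mul_apply, ih, map_sum]
    simp only [sigmaRep_single_coverBlade]
    rw [Finset.sum_comm, ← (Fin.consEquiv fun _ => Fin n).sum_comp, Fintype.sum_prod_type]
    simp [Fin.consEquiv, image_univ_fin_cons]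

theorem sigmaRep_pow_delta0_apply (k : ℕ) (p : Finset (Fin m) × Finset (Fin n)) :
    (sigmaRep E ^ k) (delta0 n m) p = #{f : Fin k → Fin n | coverBlade E (univ.image f) = p} := by
  simp [sigmaRep_pow_delta0, Pi.single_apply, eq_comm]

theorem biUnion_incidentEdges_eq_univ_iff (I : Finset (Fin n)) :
    I.biUnion (incidentEdges E) = univ ↔ IsTransversal E I := by
  simp [eq_univ_iff_forall, incidentEdges, IsTransversal]

variable {E}

theorem IsTransversal.nonempty (hm : 0 < m) {I : Finset (Fin n)} (hI : IsTransversal E I) :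
    I.Nonempty :=
  let ⟨i, hi, _⟩ := hI ⟨0, hm⟩
  ⟨i, hi⟩

theorem exists_isTransversal_min_card (hE : ∀ j, (E j).Nonempty) :
    ∃ I, IsTransversal E I ∧ ∀ I', IsTransversal E I' → #I ≤ #I' := by
  classical
  have huniv : IsTransversal E univ := fun j => (hE j).imp fun i hi => ⟨mem_univ i, hi⟩
  obtain ⟨I, hI, hmin⟩ := exists_min_image ((univ : Finset (Finset (Fin n))).filter
    (IsTransversal E)) card ⟨univ, by simpa using huniv⟩
  exact ⟨I, (mem_filter.1 hI).2, fun I' hI' => hmin I' (by simpa using hI')⟩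

theorem sigmaRep_pow_delta0_univ_ne_zero_iff (hm : 0 < m) (k : ℕ) (I : Finset (Fin n)) :
    (sigmaRep E ^ k) (delta0 n m) (univ, I) ≠ 0 ↔ IsTransversal E I ∧ #I ≤ k := by
  simp only [sigmaRep_pow_delta0_apply, ne_eq, Nat.cast_eq_zero, card_eq_zero,
    ← nonempty_iff_ne_empty, filter_nonempty_iff, mem_univ, true_and, coverBlade,
    Prod.mk.injEq]
  constructor
  · rintro ⟨f, hcover, rfl⟩
    exact ⟨(biUnion_incidentEdges_eq_univ_iff E _).1 hcover, card_image_le.trans (by simp)⟩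
  · rintro ⟨hI, hk⟩
    obtain ⟨f, rfl⟩ := exists_fin_image_univ_eq (hI.nonempty hm) hk
    exact ⟨f, (biUnion_incidentEdges_eq_univ_iff E _).2 hI, rfl⟩

end Hypergraph

open Hypergraph in
theorem minimum_transversal_representation_general {n m : ℕ} (hm : 0 < m)
    (E : Fin m → Finset (Fin n))
    (hE : ∀ j, (E j).Nonempty) :
    ∃ k : ℕ, 1 ≤ k ∧
      IsLeast {k' : ℕ | ∃ I : Finset (Fin n),
        ((sigmaRep E) ^ k') (delta0 n m) ((Finset.univ : Finset (Fin m)), I) ≠ 0} k ∧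
      IsLeast {c : ℕ | ∃ I : Finset (Fin n), I.card = c ∧
        ∀ j : Fin m, ∃ i ∈ I, i ∈ E j} k ∧
      (∀ I : Finset (Fin n),
        ((sigmaRep E) ^ k) (delta0 n m) ((Finset.univ : Finset (Fin m)), I) ≠ 0 →
          I.card = k ∧ (∀ j : Fin m, ∃ i ∈ I, i ∈ E j) ∧
            ∀ I' : Finset (Fin n), (∀ j : Fin m, ∃ i ∈ I', i ∈ E j) → I.card ≤ I'.card) ∧
      (∀ I : Finset (Fin n), (∀ j : Fin m, ∃ i ∈ I, i ∈ E j) → I.card = k →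
        ((sigmaRep E) ^ k) (delta0 n m) ((Finset.univ : Finset (Fin m)), I) ≠ 0) := by
  obtain ⟨I₀, hI₀, hmin⟩ := exists_isTransversal_min_card hE
  have coeff_ne_zero := sigmaRep_pow_delta0_univ_ne_zero_iff hm (E := E)
  refine ⟨#I₀, (hI₀.nonempty hm).card_pos, ⟨⟨I₀, (coeff_ne_zero _ _).2 ⟨hI₀, le_rfl⟩⟩, ?_⟩,
    ⟨⟨I₀, rfl, hI₀⟩, ?_⟩, fun I hI => ?_, fun I hI hcard => (coeff_ne_zero _ _).2 ⟨hI, hcard.le⟩⟩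
  · rintro k ⟨I, hI⟩
    obtain ⟨hT, hk⟩ := (coeff_ne_zero _ _).1 hI
    exact (hmin I hT).trans hk
  · rintro c ⟨I, rfl, hT⟩
    exact hmin I hT
  · obtain ⟨hT, hk⟩ := (coeff_ne_zero _ _).1 hI
    exact ⟨hk.antisymm (hmin I hT), hT, fun I' hI' => hk.trans (hmin I' hI')⟩

/-- Let `H` be a hypergraph with `n` vertices and `m ≥ 1` nonempty
hyperedges and no isolated vertices, and `σ ∈ 𝔦_m ⊗ 𝔦_n` its idem-Clifford transversal
representation.  Then there is a smallest integer `k ≥ 1` such that `σ^k` has a nonzero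
term of the form `α ε_{{1,…,m}} ⊗ x_I` in its canonical expansion; this `k` equals the
minimum cardinality of a transversal of `H`; and for this `k`, every `I` with a nonzero
coefficient on `ε_{{1,…,m}} ⊗ x_I` in `σ^k` satisfies `|I| = k` and
`{v_i : i ∈ I}` is a minimum-cardinality transversal of `H`, and every minimum
transversal arises this way. -/
theorem minimum_transversal_representation {n m : ℕ} (hm : 0 < m)
    (E : Fin m → Finset (Fin n))
    (hE : ∀ j, (E j).Nonempty) (hiso : ∀ i : Fin n, ∃ j, i ∈ E j) :
    ∃ k : ℕ, 1 ≤ k ∧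
      IsLeast {k' : ℕ | ∃ I : Finset (Fin n),
        ((sigmaRep E) ^ k') (delta0 n m) ((Finset.univ : Finset (Fin m)), I) ≠ 0} k ∧
      IsLeast {c : ℕ | ∃ I : Finset (Fin n), I.card = c ∧
        ∀ j : Fin m, ∃ i ∈ I, i ∈ E j} k ∧
      (∀ I : Finset (Fin n),
        ((sigmaRep E) ^ k) (delta0 n m) ((Finset.univ : Finset (Fin m)), I) ≠ 0 →
          I.card = k ∧ (∀ j : Fin m, ∃ i ∈ I, i ∈ E j) ∧
            ∀ I' : Finset (Fin n), (∀ j : Fin m, ∃ i ∈ I', i ∈ E j) → I.card ≤ I'.card) ∧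
      (∀ I : Finset (Fin n), (∀ j : Fin m, ∃ i ∈ I, i ∈ E j) → I.card = k →
        ((sigmaRep E) ^ k) (delta0 n m) ((Finset.univ : Finset (Fin m)), I) ≠ 0) :=
  minimum_transversal_representation_general hm E hE
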